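/- arXiv:1810.02270 — 2 statements merged into one kernel-verified Lean document; each statement's English description precedes it below -/
import Mathlib

section
/- Define `build : List α → Tree α` by `build [] = nil` and, for a nonempty list L of length n, `build L = node (build L₁) m (build L₂)` where m is the element of L at index ⌊n/2⌋, L₁ is the prefix of L of length ⌊n/2⌋, and L₂ is the suffix after position ⌊n/2⌋. Define `height nil = 0` and `height (node l a r) = 1 + max (height l) (height r)`. Then for every list L of length n, `height (build L) = Nat.clog 2 (n + 1)`; in particular, if n = 2^k − 1 then the height is exactly k. -/
/-!
Bisecting a list of length `n ≥ 1` leaves halves of lengths `⌊n/2⌋` and `n - ⌊n/2⌋ - 1 ≤ ⌊n/2⌋`,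
so the height `h n` of the built tree satisfies `h n = h ⌊n/2⌋ + 1`, `h 0 = 0`; the function
`n ↦ ⌈log₂ (n + 1)⌉` obeys the same recursion.
-/

inductive BTree (α : Type*) where
  | nil : BTree α
  | node (l : BTree α) (a : α) (r : BTree α) : BTree α

namespace BTree

variable {α : Type*}

def inorder : BTree α → List α
  | nil => []
  | node l a r => inorder l ++ [a] ++ inorder r

def Mem : BTree α → α → Prop
  | nil, _ => False
  | node l a r, x => Mem l x ∨ x = a ∨ Mem r x

def size : BTree α → ℕ
  | nil => 0
  | node l _ r => size l + 1 + size r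

def build : List α → BTree α
  | [] => nil
  | x :: xs =>
      node (build ((x :: xs).take ((x :: xs).length / 2)))
        ((x :: xs).getD ((x :: xs).length / 2) x)
        (build ((x :: xs).drop ((x :: xs).length / 2 + 1)))
  termination_by L => L.length
  decreasing_by
    · simp [List.length_take]; omega
    · simp [List.length_drop] <;> omega

def height : BTree α → ℕ
  | nil => 0
  | node l _ r => 1 + max (height l) (height r)

theorem _root_.Nat.clog_succ_eq_clog_div_succ_add_one {b n : ℕ} (hb : 1 < b) (hn : n ≠ 0) :
    Nat.clog b (n + 1) = Nat.clog b (n / b + 1) + 1 := by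
  rw [Nat.clog_of_two_le hb (by omega), show n + 1 + b - 1 = n + b by omega,
    Nat.add_div_right n (by omega)]

theorem height_build_eq_clog (L : List α) : height (build L) = Nat.clog 2 (L.length + 1) := by
  induction L using build.induct with
  | case1 => simp [build, height]
  | case2 x xs ih_left ih_right =>
    set L := x :: xs
    have h_right_le_left : (L.drop (L.length / 2 + 1)).length ≤ (L.take (L.length / 2)).length := by
      simp only [List.length_drop, List.length_take]
      omega
    rw [build, height, ih_left, ih_right, max_eq_left (Nat.clog_mono_right 2 (by omega)),
      List.length_take, min_eq_left (Nat.div_le_self _ _),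
      Nat.clog_succ_eq_clog_div_succ_add_one (n := L.length) one_lt_two (by simp [L]), add_comm]

/-- building a tree from a list of length `n` by recursive bisection
yields a tree of height `⌈log₂ (n + 1)⌉`; in particular the height is exactly `k`
when `n = 2 ^ k - 1`. -/
theorem height_build (L : List α) :
    height (build L) = Nat.clog 2 (L.length + 1) ∧
    ∀ k : ℕ, L.length = 2 ^ k - 1 → height (build L) = k := by
  refine ⟨height_build_eq_clog L, fun k hk => ?_⟩
  rw [height_build_eq_clog, hk, Nat.sub_add_cancel Nat.one_le_two_pow, Nat.clog_pow 2 k one_lt_two]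

end BTree
end

section
/- Let t be a binary tree and let p : List Bool be a valid path from the root of t (false = go to left child, true = go to right child), ending at a node v. Define the path-sum Φ(p) as follows: the root of t contributes size(left subtree of root) + 1; thereafter, each step from the current node to its left child c contributes −(size of the right subtree of c) − 1, and each step to its right child c contributes (size of the left subtree of c) + 1. Then Φ(p) equals the 1-based position of the node v in the in-order traversal of t. -/
namespace BTree

variable {α : Type*}

/-- Follow a path from the root (`false` = left child, `true` = right child),
returning the subtree reached, or `none` if the path falls off the tree. -/
def follow : BTree α → List Bool → Option (BTree α)
  | t, [] => some t
  | nil, _ :: _ => none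
  | node l _ r, b :: p => follow (if b then r else l) p

/-- Contribution of one step into the child `c`: `-(size of right subtree of c) - 1`
when stepping to a left child, `(size of left subtree of c) + 1` when stepping to a
right child. -/
def stepSum : BTree α → List Bool → ℤ
  | nil, _ => 0
  | node _ _ _, [] => 0
  | node l _ _, false :: p =>
      (match l with
       | nil => 0
       | node _ _ lr => -(size lr : ℤ) - 1) + stepSum l p
  | node _ _ r, true :: p =>
      (match r with
       | nil => 0
       | node rl _ _ => (size rl : ℤ) + 1) + stepSum r p

/-- The path-sum `Φ`: the root contributes `size (left subtree of root) + 1`, and each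
later step contributes `stepSum`-style flexions and fixed countings. -/
def phi : BTree α → List Bool → ℤ
  | nil, _ => 0
  | node l a r, p => (size l : ℤ) + 1 + stepSum (node l a r) p

/-- The 1-based position, in the in-order traversal, of the node reached by a path. -/
def pos1 : BTree α → List Bool → ℤ
  | nil, _ => 0
  | node l _ _, [] => (size l : ℤ) + 1
  | node l _ r, b :: p => if b then (size l : ℤ) + 1 + pos1 r p else pos1 l p

/-! Stepping from `node l a r` into a child `node cl _ cr`, the flexion `-(size cr) - 1` (left)
or `size cl + 1` (right) turns the root term `size l + 1` of `Φ` into `size cl + 1`, resp.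
`size l + 1 + (size cl + 1)`: `Φ` satisfies the recursion defining `pos1`. And `pos1` is the
in-order position because `inorder (node l a r)` holds `a` at index `size l`, between
`inorder l` and `inorder r`. -/

theorem length_inorder (t : BTree α) : (inorder t).length = size t := by
  induction t with
  | nil => rfl
  | node l a r ihl ihr =>
    simp only [inorder, size, List.length_append, List.length_singleton, ihl, ihr]

theorem getElem?_inorder_node_of_lt (l r : BTree α) (a : α) {i : ℕ} (hi : i < size l) :
    (inorder (node l a r))[i]? = (inorder l)[i]? := by
  rw [inorder, List.append_assoc, List.getElem?_append_left (by rwa [length_inorder])]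

theorem getElem?_inorder_node_size (l r : BTree α) (a : α) :
    (inorder (node l a r))[size l]? = some a := by
  simp [inorder, length_inorder]

theorem getElem?_inorder_node_add (l r : BTree α) (a : α) (i : ℕ) :
    (inorder (node l a r))[size l + 1 + i]? = (inorder r)[i]? := by
  rw [inorder, List.getElem?_append_right (by simp [length_inorder])]
  simp [length_inorder]

theorem follow_nil_ne_some_node (p : List Bool) (l r : BTree α) (v : α) :
    follow nil p ≠ some (node l v r) := by
  cases p <;> simp [follow]

theorem phi_node_false (ll lr r : BTree α) (a b : α) (p : List Bool) :
    phi (node (node ll b lr) a r) (false :: p) = phi (node ll b lr) p := by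
  simp only [phi, stepSum, size]
  push_cast
  ring

theorem phi_node_true (l rl rr : BTree α) (a b : α) (p : List Bool) :
    phi (node l a (node rl b rr)) (true :: p) = size l + 1 + phi (node rl b rr) p := by
  simp only [phi, stepSum]

theorem phi_eq_pos1 (t : BTree α) (p : List Bool) (l r : BTree α) (v : α)
    (h : follow t p = some (node l v r)) : phi t p = pos1 t p := by
  induction p generalizing t with
  | nil =>
    obtain rfl : t = node l v r := Option.some.inj h
    simp [phi, pos1, stepSum]
  | cons b p ih =>
    obtain _ | ⟨tl, ta, tr⟩ := t
    · exact absurd h (follow_nil_ne_some_node _ _ _ _)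
    cases b with
    | false =>
      obtain _ | ⟨ll, lb, lr⟩ := tl
      · exact absurd h (follow_nil_ne_some_node _ _ _ _)
      rw [phi_node_false, pos1, if_neg Bool.false_ne_true]
      exact ih (node ll lb lr) h
    | true =>
      obtain _ | ⟨rl, rb, rr⟩ := tr
      · exact absurd h (follow_nil_ne_some_node _ _ _ _)
      rw [phi_node_true, pos1, if_pos rfl, ih (node rl rb rr) h]

theorem exists_pos1_eq_succ_getElem?_inorder (t : BTree α) (p : List Bool) (l r : BTree α)
    (v : α) (h : follow t p = some (node l v r)) :
    ∃ n : ℕ, pos1 t p = n + 1 ∧ (inorder t)[n]? = some v := by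
  induction p generalizing t with
  | nil =>
    obtain rfl : t = node l v r := Option.some.inj h
    exact ⟨size l, rfl, getElem?_inorder_node_size l r v⟩
  | cons b p ih =>
    obtain _ | ⟨tl, ta, tr⟩ := t
    · exact absurd h (follow_nil_ne_some_node _ _ _ _)
    cases b with
    | false =>
      obtain ⟨n, hpos, hget⟩ := ih tl h
      have hn : n < size tl := length_inorder tl ▸ (List.getElem?_eq_some_iff.mp hget).1
      refine ⟨n, by rwa [pos1, if_neg Bool.false_ne_true], ?_⟩
      rwa [getElem?_inorder_node_of_lt _ _ _ hn]
    | true =>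
      obtain ⟨n, hpos, hget⟩ := ih tr h
      refine ⟨size tl + 1 + n, ?_, by rwa [getElem?_inorder_node_add]⟩
      rw [pos1, if_pos rfl, hpos]
      push_cast
      ring

/-- for a valid path `p` ending at a node carrying the key `v`, the
path-sum `Φ(p)` equals the 1-based position of that node in the in-order traversal. -/
theorem phi_eq_inorder_position (t : BTree α) (p : List Bool) (l r : BTree α) (v : α)
    (h : follow t p = some (node l v r)) :
    phi t p = pos1 t p ∧ (inorder t)[(phi t p).toNat - 1]? = some v := by
  have hphi := phi_eq_pos1 t p l r v h
  obtain ⟨n, hpos, hget⟩ := exists_pos1_eq_succ_getElem?_inorder t p l r v h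
  refine ⟨hphi, ?_⟩
  rwa [hphi, hpos, Int.toNat_natCast_add_one, Nat.add_sub_cancel]

end BTree
end
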